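/- Alinhac good-unknown decomposition: Let T be a constant-coefficient differential operator (e.g., T = Δ*² with Δ* = ∂₁² + ∂₂²), let η be a C^∞ map with 𝒜 = (∇η)^{-T}, and let f be smooth. Then T(∂^𝒜_i f) = ∂^𝒜_i (T f − Tη·∇_𝒜 f) + C_i(f), where C_i(f) = Tη·∇_𝒜(∂^𝒜_i f) + [lower-order commutator terms involving at most T applied to first derivatives of η and first derivatives of f]. In particular, the highest-order derivative Tη of η appears only through the good unknown Tf − Tη·∇_𝒜 f and the term Tη·∇_𝒜(∂^𝒜_i f). -/

import Mathlib

open Matrix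

noncomputable section

/-- Jacobian matrix of `η` : `(∇η)_{i j} = ∂_j η_i`. -/
def jacMat (η : (Fin 3 → ℝ) → (Fin 3 → ℝ)) (x : Fin 3 → ℝ) : Matrix (Fin 3) (Fin 3) ℝ :=
  fun i j => fderiv ℝ η x (Pi.single j 1) i

/-- The partial derivative `∂_j g` as a function. -/
def pd (j : Fin 3) (g : (Fin 3 → ℝ) → ℝ) : (Fin 3 → ℝ) → ℝ :=
  fun x => fderiv ℝ g x (Pi.single j 1)

/-- The horizontal Laplacian `Δ* = ∂₁² + ∂₂²`. -/
def lapStar (g : (Fin 3 → ℝ) → ℝ) : (Fin 3 → ℝ) → ℝ :=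
  fun x => pd 0 (pd 0 g) x + pd 1 (pd 1 g) x

/-- The constant-coefficient operator `T = Δ*²`. -/
def opT (g : (Fin 3 → ℝ) → ℝ) : (Fin 3 → ℝ) → ℝ :=
  lapStar (lapStar g)

/-- Twisted derivative `∂^𝒜_i g = 𝒜_{ij} ∂_j g`. -/
def pdA (A : (Fin 3 → ℝ) → Matrix (Fin 3) (Fin 3) ℝ) (i : Fin 3)
    (g : (Fin 3 → ℝ) → ℝ) : (Fin 3 → ℝ) → ℝ :=
  fun x => ∑ j, A x i j * pd j g x

variable {η : (Fin 3 → ℝ) → (Fin 3 → ℝ)}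
variable {A : (Fin 3 → ℝ) → Matrix (Fin 3) (Fin 3) ℝ}

lemma contDiff_pd {g : (Fin 3 → ℝ) → ℝ} (hg : ContDiff ℝ (⊤ : ℕ∞) g) (j : Fin 3) :
    ContDiff ℝ (⊤ : ℕ∞) (pd j g) :=
  (hg.fderiv_right (by simp)).clm_apply contDiff_const

lemma pd_comm {g : (Fin 3 → ℝ) → ℝ} (hg : ContDiff ℝ (⊤ : ℕ∞) g) (j k : Fin 3) :
    pd j (pd k g) = pd k (pd j g) := by
  funext x
  have hd : ContDiff ℝ (⊤ : ℕ∞) (fderiv ℝ g) := hg.fderiv_right (by simp)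
  have h1 : ∀ (a b : Fin 3), pd a (pd b g) x
      = (fderiv ℝ (fderiv ℝ g) x (Pi.single a 1)) (Pi.single b 1) := by
    intro a b
    show fderiv ℝ (fun y => (fderiv ℝ g y) (Pi.single b 1)) x _ = _
    rw [fderiv_clm_apply (hd.differentiable (by simp) x) (differentiableAt_const _)]
    simp
  rw [h1, h1]
  exact (hg.contDiffAt.isSymmSndFDerivAt (by rw [minSmoothness_of_isRCLikeNormedField]; exact WithTop.coe_le_coe.mpr le_top)) _ _

lemma pd_add {g h : (Fin 3 → ℝ) → ℝ} (hg : ContDiff ℝ (⊤ : ℕ∞) g) (hh : ContDiff ℝ (⊤ : ℕ∞) h) (j : Fin 3) :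
    pd j (fun x => g x + h x) = fun x => pd j g x + pd j h x := by
  funext x
  unfold pd
  rw [fderiv_fun_add (hg.differentiable (by simp) x) (hh.differentiable (by simp) x)]
  simp

lemma pd_sub {g h : (Fin 3 → ℝ) → ℝ} (hg : ContDiff ℝ (⊤ : ℕ∞) g) (hh : ContDiff ℝ (⊤ : ℕ∞) h) (j : Fin 3) :
    pd j (fun x => g x - h x) = fun x => pd j g x - pd j h x := by
  funext x
  unfold pd
  rw [fderiv_fun_sub (hg.differentiable (by simp) x) (hh.differentiable (by simp) x)]
  simp

lemma pd_neg {g : (Fin 3 → ℝ) → ℝ} (j : Fin 3) :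
    pd j (fun x => -g x) = fun x => -pd j g x := by
  funext x; unfold pd; rw [fderiv_fun_neg]; simp

lemma pd_sum {n : ℕ} {g : Fin n → (Fin 3 → ℝ) → ℝ} (hg : ∀ i, ContDiff ℝ (⊤ : ℕ∞) (g i)) (j : Fin 3) :
    pd j (fun x => ∑ i, g i x) = fun x => ∑ i, pd j (g i) x := by
  funext x
  unfold pd
  rw [fderiv_fun_sum (fun i _ => (hg i).differentiable (by simp) x)]
  simp

variable {η : (Fin 3 → ℝ) → (Fin 3 → ℝ)}

lemma contDiff_comp (hη : ContDiff ℝ (⊤ : ℕ∞) η) (p : Fin 3) : ContDiff ℝ (⊤ : ℕ∞) (fun z => η z p) :=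
  contDiff_pi.1 hη p

lemma jacMat_apply (hη : ContDiff ℝ (⊤ : ℕ∞) η) (y : Fin 3 → ℝ) (p q : Fin 3) :
    jacMat η y p q = pd q (fun z => η z p) y := by
  unfold jacMat pd
  rw [fderiv_pi (fun i => ((contDiff_pi.1 hη i).differentiable (by simp) y))]
  simp

lemma contDiff_jac (hη : ContDiff ℝ (⊤ : ℕ∞) η) (p q : Fin 3) :
    ContDiff ℝ (⊤ : ℕ∞) (fun y => jacMat η y p q) := by
  have : (fun y => jacMat η y p q) = pd q (fun z => η z p) := by
    funext y; exact jacMat_apply hη y p q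
  rw [this]; exact contDiff_pd (contDiff_comp hη p) q

lemma contDiff_det (hη : ContDiff ℝ (⊤ : ℕ∞) η) : ContDiff ℝ (⊤ : ℕ∞) (fun y => (jacMat η y).det) := by
  have h := contDiff_jac hη
  simp only [Matrix.det_fin_three]
  exact ((((((((h 0 0).mul (h 1 1)).mul (h 2 2)).sub
    (((h 0 0).mul (h 1 2)).mul (h 2 1))).sub
    (((h 0 1).mul (h 1 0)).mul (h 2 2))).add
    (((h 0 1).mul (h 1 2)).mul (h 2 0))).add
    (((h 0 2).mul (h 1 0)).mul (h 2 1))).sub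
    (((h 0 2).mul (h 1 1)).mul (h 2 0)))

lemma contDiff_adj (hη : ContDiff ℝ (⊤ : ℕ∞) η) (p q : Fin 3) :
    ContDiff ℝ (⊤ : ℕ∞) (fun y => (jacMat η y).adjugate p q) := by
  have h : ∀ a b : Fin 3,
      ContDiff ℝ (⊤ : ℕ∞) (fun y => ((jacMat η y).updateRow q (Pi.single p 1)) a b) := by
    intro a b
    rcases eq_or_ne a q with rfl | hq
    · simpa [Matrix.updateRow_apply] using contDiff_const
    · simpa [Matrix.updateRow_apply, hq] using contDiff_jac hη a b
  simp only [Matrix.adjugate_apply, Matrix.det_fin_three]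
  exact ((((((((h 0 0).mul (h 1 1)).mul (h 2 2)).sub
    (((h 0 0).mul (h 1 2)).mul (h 2 1))).sub
    (((h 0 1).mul (h 1 0)).mul (h 2 2))).add
    (((h 0 1).mul (h 1 2)).mul (h 2 0))).add
    (((h 0 2).mul (h 1 0)).mul (h 2 1))).sub
    (((h 0 2).mul (h 1 1)).mul (h 2 0)))

variable {A : (Fin 3 → ℝ) → Matrix (Fin 3) (Fin 3) ℝ}

lemma A_entry_eq (hA : ∀ x, A x = ((jacMat η x)⁻¹)ᵀ) (i j : Fin 3) :
    (fun y => A y i j) = fun y => ((jacMat η y).det)⁻¹ * (jacMat η y).adjugate j i := by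
  funext y
  rw [hA y]
  simp [Matrix.transpose_apply, Matrix.inv_def, Ring.inverse_eq_inv, Matrix.smul_apply,
    smul_eq_mul]

lemma contDiff_A (hη : ContDiff ℝ (⊤ : ℕ∞) η) (hinv : ∀ x, IsUnit (jacMat η x).det)
    (hA : ∀ x, A x = ((jacMat η x)⁻¹)ᵀ) (i j : Fin 3) :
    ContDiff ℝ (⊤ : ℕ∞) (fun y => A y i j) := by
  rw [A_entry_eq hA i j]
  exact ((contDiff_det hη).inv (fun y => (isUnit_iff_ne_zero.1 (hinv y)))).mul
    (contDiff_adj hη j i)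

lemma pd_mul' {g h : (Fin 3 → ℝ) → ℝ} (hg : ContDiff ℝ (⊤ : ℕ∞) g) (hh : ContDiff ℝ (⊤ : ℕ∞) h) (j : Fin 3) :
    pd j (fun x => g x * h x) = fun x => pd j g x * h x + g x * pd j h x := by
  funext x
  unfold pd
  rw [fderiv_fun_mul (hg.differentiable (by simp) x) (hh.differentiable (by simp) x)]
  simp; ring

lemma key (hη : ContDiff ℝ (⊤ : ℕ∞) η) (hinv : ∀ x, IsUnit (jacMat η x).det)
    (hA : ∀ x, A x = ((jacMat η x)⁻¹)ᵀ) (k i j : Fin 3) :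
    pd k (fun y => A y i j)
      = fun x => -∑ l, ∑ m, A x i l * A x m j * pd k (pd l (fun z => η z m)) x := by
  have hAe := contDiff_A hη hinv hA
  have hJ : ∀ p q, (fun y => jacMat η y p q) = pd q (fun z => η z p) := by
    intro p q; funext y; exact jacMat_apply hη y p q
  have hJe : ∀ p q, ContDiff ℝ (⊤ : ℕ∞) (fun y => jacMat η y p q) := contDiff_jac hη
  -- R1 : B * C = 1 entrywise
  have R1 : ∀ (x : Fin 3 → ℝ) (a b : Fin 3),
      jacMat η x a 0 * A x b 0 + jacMat η x a 1 * A x b 1 + jacMat η x a 2 * A x b 2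
        = if a = b then 1 else 0 := by
    intro x a b
    have h := Matrix.mul_nonsing_inv (jacMat η x) (hinv x)
    have h2 := congrFun (congrFun h a) b
    rw [Matrix.mul_apply, Fin.sum_univ_three] at h2
    rw [hA x] at *
    simpa [Matrix.one_apply, Matrix.transpose_apply] using h2
  -- E1 : derivative of C * B = 1
  have E1 : ∀ (x : Fin 3 → ℝ) (a b : Fin 3),
      (pd k (fun y => A y 0 a) x * jacMat η x 0 b
        + A x 0 a * pd k (pd b (fun z => η z 0)) x)
      + (pd k (fun y => A y 1 a) x * jacMat η x 1 b
        + A x 1 a * pd k (pd b (fun z => η z 1)) x)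
      + (pd k (fun y => A y 2 a) x * jacMat η x 2 b
        + A x 2 a * pd k (pd b (fun z => η z 2)) x) = 0 := by
    intro x a b
    have hconst : (fun y => A y 0 a * jacMat η y 0 b + A y 1 a * jacMat η y 1 b
        + A y 2 a * jacMat η y 2 b) = fun _ => if a = b then (1:ℝ) else 0 := by
      funext y
      have h := Matrix.nonsing_inv_mul (jacMat η y) (hinv y)
      have h2 := congrFun (congrFun h a) b
      rw [Matrix.mul_apply, Fin.sum_univ_three] at h2
      rw [hA y] at *
      simpa [Matrix.one_apply, Matrix.transpose_apply] using h2
    have hsm : ∀ p : Fin 3, ContDiff ℝ (⊤ : ℕ∞) (fun y => A y p a * jacMat η y p b) :=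
      fun p => (hAe p a).mul (hJe p b)
    have hd : pd k (fun y => A y 0 a * jacMat η y 0 b + A y 1 a * jacMat η y 1 b
        + A y 2 a * jacMat η y 2 b) x = 0 := by
      rw [hconst]
      simp [pd]
    have e1 : pd k (fun y => (fun y' => A y' 0 a * jacMat η y' 0 b) y
          + ((fun y' => A y' 1 a * jacMat η y' 1 b) y
            + (fun y' => A y' 2 a * jacMat η y' 2 b) y)) x
        = pd k (fun y => A y 0 a * jacMat η y 0 b) x
          + (pd k (fun y => A y 1 a * jacMat η y 1 b) x
          + pd k (fun y => A y 2 a * jacMat η y 2 b) x) := by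
      rw [pd_add (hsm 0) ((hsm 1).add (hsm 2)), pd_add (hsm 1) (hsm 2)]
    have e2 : ∀ p : Fin 3, pd k (fun y => A y p a * jacMat η y p b) x
        = pd k (fun y => A y p a) x * jacMat η x p b
          + A x p a * pd k (pd b (fun z => η z p)) x := by
      intro p
      rw [pd_mul' (hAe p a) (hJe p b)]
      rw [hJ p b]
    have : pd k (fun y => A y 0 a * jacMat η y 0 b + A y 1 a * jacMat η y 1 b
        + A y 2 a * jacMat η y 2 b) x
        = pd k (fun y => A y 0 a) x * jacMat η x 0 b + A x 0 a * pd k (pd b (fun z => η z 0)) x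
          + (pd k (fun y => A y 1 a) x * jacMat η x 1 b + A x 1 a * pd k (pd b (fun z => η z 1)) x)
          + (pd k (fun y => A y 2 a) x * jacMat η x 2 b
            + A x 2 a * pd k (pd b (fun z => η z 2)) x) := by
      rw [show (fun y => A y 0 a * jacMat η y 0 b + A y 1 a * jacMat η y 1 b
          + A y 2 a * jacMat η y 2 b)
        = (fun y => (fun y' => A y' 0 a * jacMat η y' 0 b) y
          + ((fun y' => A y' 1 a * jacMat η y' 1 b) y
            + (fun y' => A y' 2 a * jacMat η y' 2 b) y)) from by funext y; ring]
      rw [e1, e2 0, e2 1, e2 2]; ring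
    rw [hd] at this
    linarith [this]
  funext x
  rw [Fin.sum_univ_three]
  simp only [Fin.sum_univ_three]
  have X := fun (p : Fin 3) => pd k (fun y => A y p j) x
  have e0 := E1 x j 0
  have e1 := E1 x j 1
  have e2 := E1 x j 2
  fin_cases i
  · have r0 := R1 x 0 0
    have r1 := R1 x 1 0
    have r2 := R1 x 2 0
    simp only [reduceIte, Fin.isValue, show (1:Fin 3) ≠ 0 by decide, show (2:Fin 3) ≠ 0 by decide,
      if_neg] at r0 r1 r2
    simp only [Fin.isValue, Fin.zero_eta]
    linear_combination A x 0 0 * e0 + A x 0 1 * e1 + A x 0 2 * e2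
      - pd k (fun y => A y 0 j) x * r0 - pd k (fun y => A y 1 j) x * r1
      - pd k (fun y => A y 2 j) x * r2
  · have r0 := R1 x 0 1
    have r1 := R1 x 1 1
    have r2 := R1 x 2 1
    simp only [reduceIte, Fin.isValue, show (0:Fin 3) ≠ 1 by decide, show (2:Fin 3) ≠ 1 by decide,
      if_neg] at r0 r1 r2
    simp only [Fin.isValue, Fin.mk_one]
    linear_combination A x 1 0 * e0 + A x 1 1 * e1 + A x 1 2 * e2
      - pd k (fun y => A y 0 j) x * r0 - pd k (fun y => A y 1 j) x * r1
      - pd k (fun y => A y 2 j) x * r2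
  · have r0 := R1 x 0 2
    have r1 := R1 x 1 2
    have r2 := R1 x 2 2
    simp only [reduceIte, Fin.isValue, show (0:Fin 3) ≠ 2 by decide, show (1:Fin 3) ≠ 2 by decide,
      if_neg] at r0 r1 r2
    simp only [Fin.isValue, show (⟨2,by omega⟩ : Fin 3) = 2 from rfl]
    linear_combination A x 2 0 * e0 + A x 2 1 * e1 + A x 2 2 * e2
      - pd k (fun y => A y 0 j) x * r0 - pd k (fun y => A y 1 j) x * r1
      - pd k (fun y => A y 2 j) x * r2

lemma contDiff_lapStar {g : (Fin 3 → ℝ) → ℝ} (hg : ContDiff ℝ (⊤ : ℕ∞) g) :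
    ContDiff ℝ (⊤ : ℕ∞) (lapStar g) :=
  (contDiff_pd (contDiff_pd hg 0) 0).add (contDiff_pd (contDiff_pd hg 1) 1)

lemma contDiff_opT {g : (Fin 3 → ℝ) → ℝ} (hg : ContDiff ℝ (⊤ : ℕ∞) g) :
    ContDiff ℝ (⊤ : ℕ∞) (opT g) := contDiff_lapStar (contDiff_lapStar hg)

lemma lapStar_add {g h : (Fin 3 → ℝ) → ℝ} (hg : ContDiff ℝ (⊤ : ℕ∞) g) (hh : ContDiff ℝ (⊤ : ℕ∞) h) :
    lapStar (fun x => g x + h x) = fun x => lapStar g x + lapStar h x := by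
  unfold lapStar
  rw [pd_add hg hh, pd_add hg hh, pd_add (contDiff_pd hg 0) (contDiff_pd hh 0),
    pd_add (contDiff_pd hg 1) (contDiff_pd hh 1)]
  funext x; ring

lemma lapStar_neg {g : (Fin 3 → ℝ) → ℝ} :
    lapStar (fun x => -g x) = fun x => -lapStar g x := by
  unfold lapStar
  rw [pd_neg, pd_neg, pd_neg, pd_neg]
  funext x; ring

lemma lapStar_sum {n : ℕ} {g : Fin n → (Fin 3 → ℝ) → ℝ} (hg : ∀ i, ContDiff ℝ (⊤ : ℕ∞) (g i)) :
    lapStar (fun x => ∑ i, g i x) = fun x => ∑ i, lapStar (g i) x := by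
  unfold lapStar
  rw [pd_sum hg, pd_sum hg, pd_sum (fun i => contDiff_pd (hg i) 0),
    pd_sum (fun i => contDiff_pd (hg i) 1)]
  funext x; rw [← Finset.sum_add_distrib]

lemma opT_sum {n : ℕ} {g : Fin n → (Fin 3 → ℝ) → ℝ} (hg : ∀ i, ContDiff ℝ (⊤ : ℕ∞) (g i)) :
    opT (fun x => ∑ i, g i x) = fun x => ∑ i, opT (g i) x := by
  unfold opT
  rw [lapStar_sum hg, lapStar_sum (fun i => contDiff_lapStar (hg i))]

lemma pd_lapStar {g : (Fin 3 → ℝ) → ℝ} (hg : ContDiff ℝ (⊤ : ℕ∞) g) (j : Fin 3) :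
    pd j (lapStar g) = lapStar (pd j g) := by
  unfold lapStar
  rw [pd_add (contDiff_pd (contDiff_pd hg 0) 0) (contDiff_pd (contDiff_pd hg 1) 1)]
  rw [pd_comm (contDiff_pd hg 0) j 0, pd_comm hg j 0, pd_comm (contDiff_pd hg 1) j 1,
    pd_comm hg j 1]

lemma opT_pd {g : (Fin 3 → ℝ) → ℝ} (hg : ContDiff ℝ (⊤ : ℕ∞) g) (j : Fin 3) :
    opT (pd j g) = pd j (opT g) := by
  unfold opT
  rw [pd_lapStar (contDiff_lapStar hg) j, pd_lapStar hg j]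

lemma opT_split {g : (Fin 3 → ℝ) → ℝ} (hg : ContDiff ℝ (⊤ : ℕ∞) g) :
    opT g = fun x => lapStar (pd 0 (pd 0 g)) x + lapStar (pd 1 (pd 1 g)) x := by
  show lapStar (fun x => pd 0 (pd 0 g) x + pd 1 (pd 1 g) x) = _
  rw [lapStar_add (contDiff_pd (contDiff_pd hg 0) 0) (contDiff_pd (contDiff_pd hg 1) 1)]

lemma contDiff_pdA {A : (Fin 3 → ℝ) → Matrix (Fin 3) (Fin 3) ℝ}
    (hAe : ∀ i j, ContDiff ℝ (⊤ : ℕ∞) (fun y => A y i j))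
    {g : (Fin 3 → ℝ) → ℝ} (hg : ContDiff ℝ (⊤ : ℕ∞) g) (i : Fin 3) :
    ContDiff ℝ (⊤ : ℕ∞) (pdA A i g) :=
  ContDiff.sum (fun j _ => (hAe i j).mul (contDiff_pd hg j))

lemma pd_pdA {A : (Fin 3 → ℝ) → Matrix (Fin 3) (Fin 3) ℝ}
    (hAe : ∀ i j, ContDiff ℝ (⊤ : ℕ∞) (fun y => A y i j))
    {g : (Fin 3 → ℝ) → ℝ} (hg : ContDiff ℝ (⊤ : ℕ∞) g) (j i : Fin 3) :
    pd j (pdA A i g)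
      = fun x => ∑ l, (pd j (fun y => A y i l) x * pd l g x + A x i l * pd j (pd l g) x) := by
  unfold pdA
  rw [pd_sum (g := fun l => fun y => A y i l * pd l g y)
    (fun l => (hAe i l).mul (contDiff_pd hg l))]
  funext x
  refine Finset.sum_congr rfl (fun l _ => ?_)
  rw [pd_mul' (hAe i l) (contDiff_pd hg l)]

lemma pdA_comm {η : (Fin 3 → ℝ) → (Fin 3 → ℝ)} {A : (Fin 3 → ℝ) → Matrix (Fin 3) (Fin 3) ℝ}
    (hη : ContDiff ℝ (⊤ : ℕ∞) η) (hinv : ∀ x, IsUnit (jacMat η x).det)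
    (hA : ∀ x, A x = ((jacMat η x)⁻¹)ᵀ)
    {f : (Fin 3 → ℝ) → ℝ} (hf : ContDiff ℝ (⊤ : ℕ∞) f) (i m : Fin 3) :
    pdA A m (pdA A i f) = pdA A i (pdA A m f) := by
  have hAe := contDiff_A hη hinv hA
  have hem : ∀ q : Fin 3, ContDiff ℝ (⊤ : ℕ∞) (fun z => η z q) := contDiff_comp hη
  funext x
  show ∑ j, A x m j * pd j (pdA A i f) x = ∑ j, A x i j * pd j (pdA A m f) x
  simp only [pd_pdA hAe hf, key hη hinv hA]
  simp only [Fin.sum_univ_three]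
  simp only [pd_comm hf 1 0, pd_comm hf 2 0, pd_comm hf 2 1,
    pd_comm (hem 0) 1 0, pd_comm (hem 0) 2 0, pd_comm (hem 0) 2 1,
    pd_comm (hem 1) 1 0, pd_comm (hem 1) 2 0, pd_comm (hem 1) 2 1,
    pd_comm (hem 2) 1 0, pd_comm (hem 2) 2 0, pd_comm (hem 2) 2 1]
  ring

lemma pd_sum2 {g : Fin 3 → Fin 3 → (Fin 3 → ℝ) → ℝ} (hg : ∀ l m, ContDiff ℝ (⊤ : ℕ∞) (g l m))
    (j : Fin 3) :
    pd j (fun x => ∑ l, ∑ m, g l m x) = fun x => ∑ l, ∑ m, pd j (g l m) x := by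
  rw [pd_sum (fun l => ContDiff.sum fun m _ => hg l m)]
  funext x
  exact Finset.sum_congr rfl fun l _ => congrFun (pd_sum (hg l) j) x

lemma lapStar_sum2 {g : Fin 3 → Fin 3 → (Fin 3 → ℝ) → ℝ} (hg : ∀ l m, ContDiff ℝ (⊤ : ℕ∞) (g l m)) :
    lapStar (fun x => ∑ l, ∑ m, g l m x) = fun x => ∑ l, ∑ m, lapStar (g l m) x := by
  rw [lapStar_sum (fun l => ContDiff.sum fun m _ => hg l m)]
  funext x
  exact Finset.sum_congr rfl fun l _ => congrFun (lapStar_sum (hg l)) x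

/-- Alinhac good-unknown decomposition for `T = Δ*²`:
`T(∂^𝒜_i f) = ∂^𝒜_i (T f − Tη·∇_𝒜 f) + C_i(f)`, where
`C_i(f) = Δ*²η·∇_𝒜(∂^𝒜_i f) − [Δ*∂_α, 𝒜_{iℓ}𝒜_{mj}](∂_α∂_ℓη_m) ∂_j f + [Δ*², 𝒜_{ij}, ∂_j f]`
(summation over `α ∈ {1,2}` and `ℓ, m, j`; `[S,a]h = S(ah) − a(Sh)`,
`[T,a,b] = T(ab) − (Ta)b − a(Tb)`), so the highest-order derivative `Tη` of `η`
appears only through the good unknown `Tf − Tη·∇_𝒜 f` and `Tη·∇_𝒜(∂^𝒜_i f)`. -/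
theorem stmt8 (η : (Fin 3 → ℝ) → (Fin 3 → ℝ)) (hη : ContDiff ℝ (⊤ : ℕ∞) η)
    (hinv : ∀ x, IsUnit (jacMat η x).det)
    (A : (Fin 3 → ℝ) → Matrix (Fin 3) (Fin 3) ℝ)
    (hA : ∀ x, A x = ((jacMat η x)⁻¹)ᵀ)
    (f : (Fin 3 → ℝ) → ℝ) (hf : ContDiff ℝ (⊤ : ℕ∞) f)
    (x : Fin 3 → ℝ) (i : Fin 3) :
    opT (pdA A i f) x =
      pdA A i (fun y => opT f y - ∑ m, opT (fun z => η z m) y * pdA A m f y) x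
      + ((∑ m, opT (fun z => η z m) x * pdA A m (pdA A i f) x)
        - (∑ α : Fin 2, ∑ l, ∑ m, ∑ j,
            (lapStar (pd α.castSucc
                (fun y => A y i l * A y m j *
                  pd α.castSucc (pd l (fun z => η z m)) y)) x
              - A x i l * A x m j *
                  lapStar (pd α.castSucc
                    (pd α.castSucc (pd l (fun z => η z m)))) x) * pd j f x)
        + ∑ j, (opT (fun y => A y i j * pd j f y) x
            - opT (fun y => A y i j) x * pd j f x
            - A x i j * opT (pd j f) x)) := by
  have hAe := contDiff_A hη hinv hA
  have hem : ∀ q : Fin 3, ContDiff ℝ (⊤ : ℕ∞) (fun z => η z q) := contDiff_comp hη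
  have hTem : ∀ m : Fin 3, ContDiff ℝ (⊤ : ℕ∞) (opT (fun z => η z m)) := fun m => contDiff_opT (hem m)
  have hpdAf : ∀ m : Fin 3, ContDiff ℝ (⊤ : ℕ∞) (pdA A m f) := fun m => contDiff_pdA hAe hf m
  have hTf : ContDiff ℝ (⊤ : ℕ∞) (opT f) := contDiff_opT hf
  -- F1
  have hF1 : opT (pdA A i f) x = ∑ j, opT (fun y => A y i j * pd j f y) x :=
    congrFun (opT_sum (g := fun j => fun y => A y i j * pd j f y)
      (fun j => (hAe i j).mul (contDiff_pd hf j))) x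
  -- F2
  have hF2 : ∑ j, A x i j * opT (pd j f) x = pdA A i (opT f) x := by
    show _ = ∑ j, A x i j * pd j (opT f) x
    exact Finset.sum_congr rfl fun j _ => by rw [opT_pd hf j]
  -- F4
  have hF4 : ∑ m, opT (fun z => η z m) x * pdA A m (pdA A i f) x
      = ∑ m, opT (fun z => η z m) x * pdA A i (pdA A m f) x :=
    Finset.sum_congr rfl fun m _ => by rw [pdA_comm hη hinv hA hf i m]
  -- F3
  have hsum : ContDiff ℝ (⊤ : ℕ∞) (fun y => ∑ m, opT (fun z => η z m) y * pdA A m f y) :=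
    ContDiff.sum fun m _ => (hTem m).mul (hpdAf m)
  have hpdG : ∀ l : Fin 3,
      pd l (fun y => opT f y - ∑ m, opT (fun z => η z m) y * pdA A m f y) x
      = pd l (opT f) x - ∑ m, (pd l (opT (fun z => η z m)) x * pdA A m f x
          + opT (fun z => η z m) x * pd l (pdA A m f) x) := by
    intro l
    rw [pd_sub hTf hsum]
    show pd l (opT f) x - pd l (fun y => ∑ m, opT (fun z => η z m) y * pdA A m f y) x = _
    rw [pd_sum (g := fun m => fun y => opT (fun z => η z m) y * pdA A m f y)
      (fun m => (hTem m).mul (hpdAf m))]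
    congr 1
    exact Finset.sum_congr rfl fun m _ => by rw [pd_mul' (hTem m) (hpdAf m)]
  have hF3 : pdA A i (fun y => opT f y - ∑ m, opT (fun z => η z m) y * pdA A m f y) x
      = pdA A i (opT f) x
        - (∑ m, pdA A i (opT (fun z => η z m)) x * pdA A m f x)
        - ∑ m, opT (fun z => η z m) x * pdA A i (pdA A m f) x := by
    show (∑ l, A x i l
        * pd l (fun y => opT f y - ∑ m, opT (fun z => η z m) y * pdA A m f y) x) = _
    simp only [hpdG]
    show _ = (∑ l, A x i l * pd l (opT f) x)
        - (∑ m, (∑ l, A x i l * pd l (opT (fun z => η z m)) x) * pdA A m f x)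
        - ∑ m, opT (fun z => η z m) x * ∑ l, A x i l * pd l (pdA A m f) x
    simp only [Fin.sum_univ_three]
    ring
  -- smoothness of the triple products
  have hG : ∀ (k l m j : Fin 3),
      ContDiff ℝ (⊤ : ℕ∞) (fun y => A y i l * A y m j * pd k (pd l (fun z => η z m)) y) :=
    fun k l m j => ((hAe i l).mul (hAe m j)).mul (contDiff_pd (contDiff_pd (hem m) l) k)
  -- F6 ingredient : fourth derivative of A entries via the key lemma
  have hTa : ∀ j : Fin 3, opT (fun y => A y i j) x
      = -(∑ l, ∑ m, lapStar
            (pd 0 (fun y => A y i l * A y m j * pd 0 (pd l (fun z => η z m)) y)) x)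
        - ∑ l, ∑ m, lapStar
            (pd 1 (fun y => A y i l * A y m j * pd 1 (pd l (fun z => η z m)) y)) x := by
    intro j
    have hstep : ∀ k : Fin 3, lapStar (pd k (pd k (fun y => A y i j))) x
        = -∑ l, ∑ m, lapStar
            (pd k (fun y => A y i l * A y m j * pd k (pd l (fun z => η z m)) y)) x := by
      intro k
      rw [key hη hinv hA k i j]
      rw [pd_neg, pd_sum2 (fun l m => hG k l m j) k]
      rw [lapStar_neg, lapStar_sum2 (fun l m => contDiff_pd (hG k l m j) k)]
    have h := congrFun (opT_split (hAe i j)) x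
    rw [h, hstep 0, hstep 1]
    ring
  -- F6
  have hF6 : ∑ j, opT (fun y => A y i j) x * pd j f x
      = -∑ α : Fin 2, ∑ l, ∑ m, ∑ j, lapStar (pd α.castSucc
          (fun y => A y i l * A y m j * pd α.castSucc (pd l (fun z => η z m)) y)) x
          * pd j f x := by
    simp only [hTa, Fin.sum_univ_two, Fin.castSucc_zero, Fin.castSucc_one, Fin.sum_univ_three]
    ring
  -- F5 ingredient
  have hsplit : ∀ l m : Fin 3,
      lapStar (pd 0 (pd 0 (pd l (fun z => η z m)))) x
        + lapStar (pd 1 (pd 1 (pd l (fun z => η z m)))) x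
      = pd l (opT (fun z => η z m)) x := by
    intro l m
    have h := congrFun (opT_split (contDiff_pd (hem m) l)) x
    rw [← h, opT_pd (hem m) l]
  -- F5
  have hSUB : (∑ α : Fin 2, ∑ l, ∑ m, ∑ j, A x i l * A x m j
        * lapStar (pd α.castSucc (pd α.castSucc (pd l (fun z => η z m)))) x * pd j f x)
      = ∑ m, pdA A i (opT (fun z => η z m)) x * pdA A m f x := by
    simp only [Fin.sum_univ_two, Fin.castSucc_zero, Fin.castSucc_one, Fin.sum_univ_three, pdA]
    linear_combination
      (A x i 0 * (A x 0 0 * pd 0 f x + A x 0 1 * pd 1 f x + A x 0 2 * pd 2 f x)) * hsplit 0 0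
      + (A x i 0 * (A x 1 0 * pd 0 f x + A x 1 1 * pd 1 f x + A x 1 2 * pd 2 f x)) * hsplit 0 1
      + (A x i 0 * (A x 2 0 * pd 0 f x + A x 2 1 * pd 1 f x + A x 2 2 * pd 2 f x)) * hsplit 0 2
      + (A x i 1 * (A x 0 0 * pd 0 f x + A x 0 1 * pd 1 f x + A x 0 2 * pd 2 f x)) * hsplit 1 0
      + (A x i 1 * (A x 1 0 * pd 0 f x + A x 1 1 * pd 1 f x + A x 1 2 * pd 2 f x)) * hsplit 1 1
      + (A x i 1 * (A x 2 0 * pd 0 f x + A x 2 1 * pd 1 f x + A x 2 2 * pd 2 f x)) * hsplit 1 2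
      + (A x i 2 * (A x 0 0 * pd 0 f x + A x 0 1 * pd 1 f x + A x 0 2 * pd 2 f x)) * hsplit 2 0
      + (A x i 2 * (A x 1 0 * pd 0 f x + A x 1 1 * pd 1 f x + A x 1 2 * pd 2 f x)) * hsplit 2 1
      + (A x i 2 * (A x 2 0 * pd 0 f x + A x 2 1 * pd 1 f x + A x 2 2 * pd 2 f x)) * hsplit 2 2
  have hS2 : (∑ α : Fin 2, ∑ l, ∑ m, ∑ j,
        (lapStar (pd α.castSucc (fun y => A y i l * A y m j
            * pd α.castSucc (pd l (fun z => η z m)) y)) x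
          - A x i l * A x m j
            * lapStar (pd α.castSucc (pd α.castSucc (pd l (fun z => η z m)))) x) * pd j f x)
      = (∑ α : Fin 2, ∑ l, ∑ m, ∑ j, lapStar (pd α.castSucc
          (fun y => A y i l * A y m j * pd α.castSucc (pd l (fun z => η z m)) y)) x
          * pd j f x)
        - ∑ m, pdA A i (opT (fun z => η z m)) x * pdA A m f x := by
    rw [← hSUB, ← Finset.sum_sub_distrib]
    refine Finset.sum_congr rfl fun α _ => ?_
    rw [← Finset.sum_sub_distrib]
    refine Finset.sum_congr rfl fun l _ => ?_
    rw [← Finset.sum_sub_distrib]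
    refine Finset.sum_congr rfl fun m _ => ?_
    rw [← Finset.sum_sub_distrib]
    exact Finset.sum_congr rfl fun j _ => by ring
  -- endgame
  rw [hF1, hF3, hF4, hS2]
  have hS3 : ∑ j, (opT (fun y => A y i j * pd j f y) x
      - opT (fun y => A y i j) x * pd j f x - A x i j * opT (pd j f) x)
      = (∑ j, opT (fun y => A y i j * pd j f y) x)
        - (∑ j, opT (fun y => A y i j) x * pd j f x)
        - ∑ j, A x i j * opT (pd j f) x := by
    simp only [Finset.sum_sub_distrib]
  rw [hS3]
  linarith [hF2, hF6]
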